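/- Let X be a finite nonempty set, let Z and Z' be neighboring finite multisets of vectors z : X → ℝ with |Z| ≥ 3, and let x ∈ X be such that leftmed(Z)_x = rightmed(Z)_x. Then med(Z')_x = med(Z)_x; that is, the local sensitivity of the median in the x-th component is zero when the median gap in that component is zero. -/

import Mathlib

/-!
If the left and right medians of `S` coincide, then, since the sorted list of `S` is monotone,
all its entries between the two median positions equal that common value `m`, and so does
`med S`. Adding or removing one element shifts every order statistic by at most one position
(the sorted lists interlace), so the one or two middle entries of the neighbouring multiset
are squeezed between two entries of that constant window, hence also equal `m`.
-/

open Real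

/-- The left-median of a finite multiset of reals (see context):
    for sorted values `s_1 ≤ … ≤ s_N`, this is `s_k` when `N = 2k` or `N = 2k+1` (`N ≥ 2`),
    and `s_1` when `N = 1`. (0-indexed: `N/2 - 1`.) -/
noncomputable def leftmed (S : Multiset ℝ) : ℝ :=
  if S.card = 1 then (S.sort (· ≤ ·)).getD 0 0
  else (S.sort (· ≤ ·)).getD (S.card / 2 - 1) 0

/-- The right-median: `s_{k+1}` when `N = 2k`, `s_{k+2}` when `N = 2k+1 ≥ 3`, `s_1` when `N = 1`. -/
noncomputable def rightmed (S : Multiset ℝ) : ℝ :=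
  if S.card = 1 then (S.sort (· ≤ ·)).getD 0 0
  else if S.card % 2 = 0 then (S.sort (· ≤ ·)).getD (S.card / 2) 0
  else (S.sort (· ≤ ·)).getD (S.card / 2 + 1) 0

/-- The median: `(s_k + s_{k+1})/2` when `N = 2k`, `s_{k+1}` when `N = 2k+1`. -/
noncomputable def med (S : Multiset ℝ) : ℝ :=
  if S.card = 1 then (S.sort (· ≤ ·)).getD 0 0
  else if S.card % 2 = 0 then
    ((S.sort (· ≤ ·)).getD (S.card / 2 - 1) 0 + (S.sort (· ≤ ·)).getD (S.card / 2) 0) / 2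
  else (S.sort (· ≤ ·)).getD (S.card / 2) 0
/-- Two finite multisets are neighbors if one is obtained from the other by adding a single
    element (equivalently their symmetric difference has size 1). -/
def Neighbors {α : Type*} (Z Z' : Multiset α) : Prop :=
  (∃ a, Z' = a ::ₘ Z) ∨ (∃ a, Z = a ::ₘ Z')

/-- The multiset `Z^{(x)}` of `x`-th components of a multiset of vectors. -/
def compAt {X : Type*} (Z : Multiset (X → ℝ)) (x : X) : Multiset ℝ :=
  Z.map (fun z => z x)

/-- Componentwise left-median of a multiset of vectors. -/
noncomputable def leftmedVec {X : Type*} (Z : Multiset (X → ℝ)) : X → ℝ :=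
  fun x => leftmed (compAt Z x)

/-- Componentwise median of a multiset of vectors. -/
noncomputable def medVec {X : Type*} (Z : Multiset (X → ℝ)) : X → ℝ :=
  fun x => med (compAt Z x)

/-- Componentwise right-median of a multiset of vectors. -/
noncomputable def rightmedVec {X : Type*} (Z : Multiset (X → ℝ)) : X → ℝ :=
  fun x => rightmed (compAt Z x)

namespace List

variable {α : Type*} [LinearOrder α] {l : List α} {d : α} {i j : ℕ}

theorem Pairwise.getD_le_getD (hl : l.Pairwise (· ≤ ·)) (hij : i ≤ j) (hj : j < l.length) :
    l.getD i d ≤ l.getD j d := by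
  rw [getD_eq_getElem _ _ (hij.trans_lt hj), getD_eq_getElem _ _ hj]
  exact hl.rel_get_of_le (a := ⟨i, hij.trans_lt hj⟩) (b := ⟨j, hj⟩) hij

theorem Pairwise.getD_orderedInsert_le (hl : l.Pairwise (· ≤ ·)) (a : α) (hi : i < l.length) :
    (l.orderedInsert (· ≤ ·) a).getD i d ≤ l.getD i d := by
  induction l generalizing i with
  | nil => simp at hi
  | cons b t ih =>
    by_cases hab : a ≤ b
    · rw [orderedInsert_cons_of_le _ _ hab]
      cases i with
      | zero => simpa using hab
      | succ j => exact hl.getD_le_getD j.le_succ hi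
    · rw [orderedInsert_of_not_le _ _ hab]
      cases i with
      | zero => simp
      | succ j => simpa using ih hl.of_cons (by simpa using hi)

theorem Pairwise.getD_le_getD_orderedInsert_succ (hl : l.Pairwise (· ≤ ·)) (a : α)
    (hi : i < l.length) : l.getD i d ≤ (l.orderedInsert (· ≤ ·) a).getD (i + 1) d := by
  induction l generalizing i with
  | nil => simp at hi
  | cons b t ih =>
    by_cases hab : a ≤ b
    · rw [orderedInsert_cons_of_le _ _ hab, getD_cons_succ]
    · cases i with
      | zero =>
        have hsorted := hl.orderedInsert a
        rw [orderedInsert_of_not_le _ _ hab] at hsorted ⊢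
        simpa using
          hsorted.getD_le_getD (d := d) (Nat.zero_le 1) (by simp [orderedInsert_length])
      | succ j =>
        rw [orderedInsert_of_not_le _ _ hab, getD_cons_succ, getD_cons_succ]
        exact ih hl.of_cons (by simpa using hi)

end List

namespace Multiset

variable {α : Type*} [LinearOrder α]

theorem sort_cons_eq_orderedInsert (a : α) (s : Multiset α) :
    (a ::ₘ s).sort = s.sort.orderedInsert (· ≤ ·) a := by
  refine List.Perm.eq_of_pairwise' (pairwise_sort _ _) ((pairwise_sort _ _).orderedInsert a _) ?_
  refine coe_eq_coe.mp ?_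
  rw [sort_eq, coe_eq_coe.mpr (List.perm_orderedInsert _ a _), ← cons_coe, sort_eq]

theorem sort_cons_getD_le (a : α) (s : Multiset α) {d : α} {i : ℕ} (hi : i < card s) :
    (a ::ₘ s).sort.getD i d ≤ s.sort.getD i d := by
  rw [sort_cons_eq_orderedInsert]
  exact (pairwise_sort s _).getD_orderedInsert_le a (by rwa [length_sort])

theorem sort_getD_le_sort_cons_getD_succ (a : α) (s : Multiset α) {d : α} {i : ℕ}
    (hi : i < card s) : s.sort.getD i d ≤ (a ::ₘ s).sort.getD (i + 1) d := by
  rw [sort_cons_eq_orderedInsert]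
  exact (pairwise_sort s _).getD_le_getD_orderedInsert_succ a (by rwa [length_sort])

end Multiset

namespace Neighbors

theorem map {α β : Type*} {s t : Multiset α} (h : Neighbors s t) (f : α → β) :
    Neighbors (s.map f) (t.map f) := by
  rcases h with ⟨a, rfl⟩ | ⟨a, rfl⟩
  · exact .inl ⟨f a, Multiset.map_cons f a s⟩
  · exact .inr ⟨f a, Multiset.map_cons f a t⟩

end Neighbors

section Median

open Multiset

variable {S : Multiset ℝ}

theorem leftmed_eq_getD (S : Multiset ℝ) : leftmed S = S.sort.getD (card S / 2 - 1) 0 := by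
  unfold leftmed
  split_ifs with h <;> simp [h]

theorem rightmed_eq_getD (hS : card S ≠ 1) : rightmed S = S.sort.getD ((card S + 1) / 2) 0 := by
  unfold rightmed
  split_ifs with h₁ h₂
  · exact absurd h₁ hS
  · congr 1; omega
  · congr 1; omega

theorem med_eq_getD (S : Multiset ℝ) :
    med S = (S.sort.getD ((card S - 1) / 2) 0 + S.sort.getD (card S / 2) 0) / 2 := by
  unfold med
  split_ifs with h₁ h₂
  · simp [h₁]
  · congr 3; omega
  · rw [show (card S - 1) / 2 = card S / 2 by omega, add_self_div_two]

theorem sort_getD_eq_leftmed_of_gap (hS : 2 ≤ card S) (hgap : leftmed S = rightmed S) {i : ℕ}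
    (hi₁ : card S / 2 - 1 ≤ i) (hi₂ : i ≤ (card S + 1) / 2) :
    S.sort.getD i 0 = leftmed S := by
  have hsorted := pairwise_sort S (· ≤ ·)
  have hlen : (card S + 1) / 2 < S.sort.length := by rw [length_sort]; omega
  apply le_antisymm
  · rw [hgap, rightmed_eq_getD (by omega)]
    exact hsorted.getD_le_getD hi₂ hlen
  · rw [leftmed_eq_getD]
    exact hsorted.getD_le_getD hi₁ (by omega)

theorem med_eq_leftmed_of_gap (hS : 2 ≤ card S) (hgap : leftmed S = rightmed S) :
    med S = leftmed S := by
  rw [med_eq_getD, sort_getD_eq_leftmed_of_gap hS hgap (by omega) (by omega),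
    sort_getD_eq_leftmed_of_gap hS hgap (by omega) (by omega), add_self_div_two]

theorem sort_cons_getD_eq_leftmed_of_gap (hS : 2 ≤ card S) (hgap : leftmed S = rightmed S)
    (a : ℝ) {i : ℕ} (hi₁ : card S / 2 ≤ i) (hi₂ : i ≤ (card S + 1) / 2) :
    (a ::ₘ S).sort.getD i 0 = leftmed S := by
  obtain ⟨j, rfl⟩ : ∃ j, i = j + 1 := ⟨i - 1, by omega⟩
  apply le_antisymm
  · rw [← sort_getD_eq_leftmed_of_gap hS hgap (i := j + 1) (by omega) hi₂]
    exact sort_cons_getD_le a S (by omega)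
  · rw [← sort_getD_eq_leftmed_of_gap hS hgap (i := j) (by omega) (by omega)]
    exact sort_getD_le_sort_cons_getD_succ a S (by omega)

theorem sort_getD_eq_leftmed_cons_of_gap (hS : 2 ≤ card S) {a : ℝ}
    (hgap : leftmed (a ::ₘ S) = rightmed (a ::ₘ S)) {i : ℕ} (hi₁ : (card S - 1) / 2 ≤ i)
    (hi₂ : i ≤ card S / 2) : S.sort.getD i 0 = leftmed (a ::ₘ S) := by
  have hS' : 2 ≤ card (a ::ₘ S) := by rw [card_cons]; omega
  apply le_antisymm
  · rw [← sort_getD_eq_leftmed_of_gap hS' hgap (i := i + 1) (by rw [card_cons]; omega)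
      (by rw [card_cons]; omega)]
    exact sort_getD_le_sort_cons_getD_succ a S (by omega)
  · rw [← sort_getD_eq_leftmed_of_gap hS' hgap (i := i) (by rw [card_cons]; omega)
      (by rw [card_cons]; omega)]
    exact sort_cons_getD_le a S (by omega)

theorem med_cons_eq_leftmed_of_gap (hS : 2 ≤ card S) (hgap : leftmed S = rightmed S) (a : ℝ) :
    med (a ::ₘ S) = leftmed S := by
  rw [med_eq_getD, card_cons, Nat.add_sub_cancel,
    sort_cons_getD_eq_leftmed_of_gap hS hgap a le_rfl (by omega),
    sort_cons_getD_eq_leftmed_of_gap hS hgap a (by omega) le_rfl, add_self_div_two]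

theorem med_eq_leftmed_cons_of_gap (hS : 2 ≤ card S) {a : ℝ}
    (hgap : leftmed (a ::ₘ S) = rightmed (a ::ₘ S)) : med S = leftmed (a ::ₘ S) := by
  rw [med_eq_getD, sort_getD_eq_leftmed_cons_of_gap hS hgap le_rfl (by omega),
    sort_getD_eq_leftmed_cons_of_gap hS hgap (by omega) le_rfl, add_self_div_two]

theorem med_eq_of_neighbors_of_gap {S' : Multiset ℝ} (h : Neighbors S S') (hS : 3 ≤ card S)
    (hgap : leftmed S = rightmed S) : med S' = med S := by
  rcases h with ⟨a, rfl⟩ | ⟨a, rfl⟩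
  · rw [med_cons_eq_leftmed_of_gap (by omega) hgap, med_eq_leftmed_of_gap (by omega) hgap]
  · rw [card_cons] at hS
    rw [med_eq_leftmed_cons_of_gap (by omega) hgap,
      med_eq_leftmed_of_gap (by rw [card_cons]; omega) hgap]

end Median

theorem medVec_eq_of_median_gap_zero_general
    {X : Type*}
    (Z Z' : Multiset (X → ℝ)) (hZZ' : Neighbors Z Z') (hZ : 3 ≤ Z.card)
    (x : X) (hgap : leftmedVec Z x = rightmedVec Z x) :
    medVec Z' x = medVec Z x :=
  med_eq_of_neighbors_of_gap (hZZ'.map _) (by rwa [compAt, Multiset.card_map]) hgap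

/-- For neighboring finite multisets `Z, Z'` of vectors in `ℝ^X`
    with `|Z| ≥ 3`, and any component `x` with zero median gap
    (`leftmed(Z)_x = rightmed(Z)_x`), the median in that component does not move:
    `med(Z')_x = med(Z)_x`. -/
theorem medVec_eq_of_median_gap_zero
    {X : Type*} [Fintype X] [Nonempty X]
    (Z Z' : Multiset (X → ℝ)) (hZZ' : Neighbors Z Z') (hZ : 3 ≤ Z.card)
    (x : X) (hgap : leftmedVec Z x = rightmedVec Z x) :
    medVec Z' x = medVec Z x :=
  medVec_eq_of_median_gap_zero_general Z Z' hZZ' hZ x hgap
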